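/- Let ℰ_0 ≤ ⋯ ≤ ℰ_{m−1} be energies with ℰ_0 = 0, and let 0 ≤ β_1 ≤ β_2. Then the hotter Gibbs vector is majorized by the colder one: τ(β_1,ℰ) ≺ τ(β_2,ℰ). -/

import Mathlib

open Filter Topology Kronecker Matrix
open scoped ComplexOrder

/-- Sum of the `k` largest entries of a real vector (maximum of all `k`-element subset sums). -/
noncomputable def sumKLargest {ι : Type*} [Fintype ι] (v : ι → ℝ) (k : ℕ) : ℝ :=
  sSup {x : ℝ | ∃ s : Finset ι, s.card = k ∧ ∑ i ∈ s, v i = x}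

/-- `IsMajorizedBy x y` means `x ≺ y`: same total sum, and for every `k = 1,…,n` the
sum of the `k` largest entries of `x` is at most that of `y`. -/
def IsMajorizedBy {ι : Type*} [Fintype ι] (x y : ι → ℝ) : Prop :=
  (∑ i, x i = ∑ i, y i) ∧
  ∀ k : ℕ, 1 ≤ k → k ≤ Fintype.card ι → sumKLargest x k ≤ sumKLargest y k

/-- The decreasing rearrangement of a real vector. -/
noncomputable def sortDesc {n : ℕ} (v : Fin n → ℝ) : Fin n → ℝ :=
  fun i => v (Tuple.sort v i.rev)

/-- The geometric probability vector `p*(g,d)` with entries `g^i / ∑_j g^j`. -/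
noncomputable def pstar (g : ℝ) (d : ℕ) : Fin d → ℝ :=
  fun i => g ^ (i : ℕ) / ∑ j : Fin d, g ^ (j : ℕ)

/-- The Gibbs probability vector at inverse temperature `β` for energies `E`. -/
noncomputable def gibbsVec {m : ℕ} (β : ℝ) (E : Fin m → ℝ) : Fin m → ℝ :=
  fun j => Real.exp (-(β * E j)) / ∑ k : Fin m, Real.exp (-(β * E k))

/-- The Gibbs state: diagonal density matrix with the Gibbs vector on the diagonal. -/
noncomputable def gibbsState {m : ℕ} (β : ℝ) (E : Fin m → ℝ) : Matrix (Fin m) (Fin m) ℂ :=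
  Matrix.diagonal fun j => (gibbsVec β E j : ℂ)

/-- The eigenvalues of a Hermitian matrix (junk value `0` if not Hermitian). -/
noncomputable def eigVec {ι : Type*} [Fintype ι] [DecidableEq ι] (ρ : Matrix ι ι ℂ) : ι → ℝ := by
  classical exact if h : ρ.IsHermitian then h.eigenvalues else 0

/-- The eigenvalue vector of a Hermitian matrix, listed in decreasing order. -/
noncomputable def eigVecDesc {d : ℕ} (ρ : Matrix (Fin d) (Fin d) ℂ) : Fin d → ℝ :=
  sortDesc (eigVec ρ)

/-- Partial trace over the machine: `(Tr_M X)_{s,s'} = ∑_m X_{(s,m),(s',m)}`. -/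
noncomputable def ptraceM {dS dM : ℕ}
    (X : Matrix (Fin dS × Fin dM) (Fin dS × Fin dM) ℂ) : Matrix (Fin dS) (Fin dS) ℂ :=
  Matrix.of fun s s' => ∑ m : Fin dM, X (s, m) (s', m)

/-- The coherent operation `Λ_U(ρ) = Tr_M (U (ρ ⊗ τ_M) U†)` where `τ_M` is the diagonal
machine state with diagonal `τ`. -/
noncomputable def coherentOp {dS dM : ℕ} (τ : Fin dM → ℝ)
    (U : Matrix (Fin dS × Fin dM) (Fin dS × Fin dM) ℂ)
    (ρ : Matrix (Fin dS) (Fin dS) ℂ) : Matrix (Fin dS) (Fin dS) ℂ :=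
  ptraceM (U * (ρ ⊗ₖ Matrix.diagonal fun j => (τ j : ℂ)) * Uᴴ)

/-- `Λ_{U_n} ∘ ⋯ ∘ Λ_{U_1} (ρ)`: the machine is reset to its Gibbs state before each cycle. -/
noncomputable def coherentSeq {dS dM : ℕ} (τ : Fin dM → ℝ) {n : ℕ}
    (U : Fin n → Matrix (Fin dS × Fin dM) (Fin dS × Fin dM) ℂ)
    (ρ : Matrix (Fin dS) (Fin dS) ℂ) : Matrix (Fin dS) (Fin dS) ℂ :=
  (List.ofFn U).foldl (fun σ V => coherentOp τ V σ) ρ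

/-- The optimal coherent operation `A`: the diagonal matrix whose `i`-th diagonal entry is
`∑_{j<d_M} λ_{i·d_M+j}` where `λ` is the decreasing list of eigenvalues of `ρ ⊗ τ_M`. -/
noncomputable def Aopt {dS dM : ℕ} (τ : Fin dM → ℝ)
    (ρ : Matrix (Fin dS) (Fin dS) ℂ) : Matrix (Fin dS) (Fin dS) ℂ :=
  Matrix.diagonal fun i : Fin dS =>
    ((∑ j : Fin dM,
      sortDesc
        (fun k : Fin (dS * dM) =>
          eigVec (ρ ⊗ₖ Matrix.diagonal fun l => (τ l : ℂ)) (finProdFinEquiv.symm k))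
        ⟨(i : ℕ) * dM + (j : ℕ), by
          calc (i : ℕ) * dM + (j : ℕ) < (i : ℕ) * dM + dM := by
                exact Nat.add_lt_add_left j.isLt _
            _ = ((i : ℕ) + 1) * dM := by ring
            _ ≤ dS * dM := Nat.mul_le_mul_right dM i.isLt⟩ : ℝ) : ℂ)

/-- `Δ_i(p) = a·p_i − b·p_{i−1}` for `i ≥ 1` (and `0` for `i = 0`). -/
noncomputable def delta (a b : ℝ) {d : ℕ} (p : Fin d → ℝ) (i : Fin d) : ℝ :=
  if (i : ℕ) = 0 then 0
  else a * p i - b * p ⟨(i : ℕ) - 1, Nat.lt_of_le_of_lt (Nat.sub_le _ _) i.isLt⟩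

/-- The max-swap map `B`: if some `Δ_i(p) > 0`, pick an index `k̄` maximizing `Δ`,
move `Δ_{k̄}(p)` of population from level `k̄` to level `k̄−1`, and rearrange decreasingly;
otherwise `p` is left unchanged. -/
noncomputable def maxSwap (a b : ℝ) {d : ℕ} (p : Fin d → ℝ) : Fin d → ℝ := by
  classical
  exact
    if h : ∃ k : Fin d, 0 < delta a b p k ∧ ∀ i, delta a b p i ≤ delta a b p k then
      sortDesc (fun i =>
        if i = h.choose then p h.choose - delta a b p h.choose
        else if (i : ℕ) = (h.choose : ℕ) - 1 then p i + delta a b p h.choose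
        else p i)
    else p

/-
For `0 ≤ β` the Gibbs vector is decreasing, so for both temperatures the sum of its `k` largest
entries is its sum over the `k` lowest energy levels. With Boltzmann weights `a = e^{-β₁ℰ}`,
`b = e^{-β₂ℰ}` and `t` the `k` lowest levels, `a_j b_l ≤ b_j a_l` whenever `j ∈ t` and `l ∉ t`;
summing over `t × tᶜ` gives `(∑_t a)(∑_{tᶜ} b) ≤ (∑_t b)(∑_{tᶜ} a)`, which says that the
colder state puts at least as much weight on `t`.
-/

lemma Finset.sum_le_sum_of_card_eq_of_dominates {ι : Type*} [DecidableEq ι] {v : ι → ℝ}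
    {s t : Finset ι}
    (hcard : s.card = t.card) (ht : ∀ i ∈ t, ∀ j ∉ t, v j ≤ v i) :
    ∑ i ∈ s, v i ≤ ∑ i ∈ t, v i := by
  have hdiff : (s \ t).card = (t \ s).card := Finset.card_sdiff_comm hcard
  have hexchange : ∑ i ∈ s \ t, v i ≤ ∑ i ∈ t \ s, v i := by
    rcases (t \ s).eq_empty_or_nonempty with hts | hts
    · rw [Finset.card_eq_zero.1 (hdiff.trans (Finset.card_eq_zero.2 hts)), hts]
    · set c := (t \ s).inf' hts v
      have hle : ∀ j ∈ s \ t, v j ≤ c := fun j hj =>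
        Finset.le_inf' hts _ fun i hi =>
          ht i (Finset.mem_sdiff.1 hi).1 j (Finset.mem_sdiff.1 hj).2
      calc ∑ j ∈ s \ t, v j ≤ (s \ t).card • c := Finset.sum_le_card_nsmul _ _ _ hle
        _ = (t \ s).card • c := by rw [hdiff]
        _ ≤ ∑ i ∈ t \ s, v i := Finset.card_nsmul_le_sum _ _ _ fun i hi => Finset.inf'_le _ hi
  rw [← Finset.sum_inter_add_sum_sdiff s t, ← Finset.sum_inter_add_sum_sdiff t s,
    Finset.inter_comm]
  linarith

section SumKLargest

variable {ι : Type*} [Fintype ι]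

lemma le_sumKLargest (v : ι → ℝ) (s : Finset ι) : ∑ i ∈ s, v i ≤ sumKLargest v s.card := by
  refine le_csSup ?_ ⟨s, rfl, rfl⟩
  refine ((Set.finite_range fun t : Finset ι => ∑ i ∈ t, v i).subset ?_).bddAbove
  rintro x ⟨t, -, rfl⟩
  exact ⟨t, rfl⟩

lemma sumKLargest_le {v : ι → ℝ} {k : ℕ} {c : ℝ} (hk : k ≤ Fintype.card ι)
    (h : ∀ s : Finset ι, s.card = k → ∑ i ∈ s, v i ≤ c) : sumKLargest v k ≤ c := by
  obtain ⟨t, -, ht⟩ := Finset.exists_subset_card_eq (s := Finset.univ) (by simpa using hk)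
  refine csSup_le ⟨_, t, ht, rfl⟩ ?_
  rintro x ⟨s, hs, rfl⟩
  exact h s hs

lemma sumKLargest_card_eq_sum {v : ι → ℝ} {t : Finset ι} (ht : ∀ i ∈ t, ∀ j ∉ t, v j ≤ v i) :
    sumKLargest v t.card = ∑ i ∈ t, v i := by
  classical
  exact le_antisymm
    (sumKLargest_le (Finset.card_le_univ t) fun _ hs =>
      Finset.sum_le_sum_of_card_eq_of_dominates hs ht)
    (le_sumKLargest v t)

end SumKLargest

lemma Finset.sum_div_sum_le_sum_div_sum {ι : Type*} [Fintype ι] [DecidableEq ι] {a b : ι → ℝ}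
    (ha : 0 < ∑ i, a i) (hb : 0 < ∑ i, b i) {t : Finset ι}
    (hab : ∀ j ∈ t, ∀ l ∉ t, a j * b l ≤ b j * a l) :
    (∑ i ∈ t, a i) / ∑ i, a i ≤ (∑ i ∈ t, b i) / ∑ i, b i := by
  have hcross : (∑ j ∈ t, a j) * ∑ l ∈ tᶜ, b l ≤ (∑ j ∈ t, b j) * ∑ l ∈ tᶜ, a l := by
    rw [Finset.sum_mul_sum, Finset.sum_mul_sum]
    exact Finset.sum_le_sum fun j hj => Finset.sum_le_sum fun l hl =>
      hab j hj l (Finset.mem_compl.1 hl)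
  rw [div_le_div_iff₀ ha hb, ← Finset.sum_add_sum_compl t a, ← Finset.sum_add_sum_compl t b]
  nlinarith

lemma IsLowerSet.forall_lt_of_mem_of_notMem {α : Type*} [LinearOrder α] {s : Set α}
    (hs : IsLowerSet s) {i j : α} (hi : i ∈ s) (hj : j ∉ s) : i < j :=
  lt_of_not_ge fun hji => hj (hs hji hi)

section Gibbs

variable {m : ℕ} {E : Fin m → ℝ}

lemma gibbsVec_antitone {β : ℝ} (hβ : 0 ≤ β) (hE : Monotone E) : Antitone (gibbsVec β E) :=
  fun _ _ hij => by unfold gibbsVec; gcongr; exact hE hij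

lemma gibbs_partitionFunction_pos (hm : 0 < m) (β : ℝ) :
    0 < ∑ k : Fin m, Real.exp (-(β * E k)) :=
  Finset.sum_pos (fun _ _ => Real.exp_pos _) ⟨⟨0, hm⟩, Finset.mem_univ _⟩

lemma sum_gibbsVec_eq_one (hm : 0 < m) (β : ℝ) : ∑ j, gibbsVec β E j = 1 := by
  simp only [gibbsVec, ← Finset.sum_div, div_self (gibbs_partitionFunction_pos hm β).ne']

lemma sum_gibbsVec_le_of_le {β₁ β₂ : ℝ} (hm : 0 < m) (hE : Monotone E) (h12 : β₁ ≤ β₂)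
    {t : Finset (Fin m)} (ht : IsLowerSet (t : Set (Fin m))) :
    ∑ j ∈ t, gibbsVec β₁ E j ≤ ∑ j ∈ t, gibbsVec β₂ E j := by
  simp only [gibbsVec, ← Finset.sum_div]
  refine Finset.sum_div_sum_le_sum_div_sum (gibbs_partitionFunction_pos hm β₁)
    (gibbs_partitionFunction_pos hm β₂) fun j hj l hl => ?_
  have hEjl : E j ≤ E l := hE (ht.forall_lt_of_mem_of_notMem hj hl).le
  rw [← Real.exp_add, ← Real.exp_add, Real.exp_le_exp]
  nlinarith [mul_nonneg (sub_nonneg.2 h12) (sub_nonneg.2 hEjl)]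

end Gibbs

theorem gibbs_hotter_majorized_by_colder_general {m : ℕ}
    (E : Fin m → ℝ) (hmono : Monotone E)
    (β₁ β₂ : ℝ) (h1 : 0 ≤ β₁) (h12 : β₁ ≤ β₂) :
    IsMajorizedBy (gibbsVec β₁ E) (gibbsVec β₂ E) := by
  refine ⟨?_, fun k hk1 hkm => ?_⟩
  · rcases m.eq_zero_or_pos with rfl | hm
    · simp
    · rw [sum_gibbsVec_eq_one hm, sum_gibbsVec_eq_one hm]
  set t : Finset (Fin m) := {i | (i : ℕ) < k}
  have hk : k ≤ m := by simpa using hkm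
  have hcard : t.card = k := by rw [Fin.card_filter_val_lt, min_eq_right hk]
  have hlower : IsLowerSet (t : Set (Fin m)) := fun i j hji hj => by
    simp only [t, Finset.coe_filter, Finset.mem_univ, true_and, Set.mem_ofPred_eq] at hj ⊢
    exact lt_of_le_of_lt hji hj
  have htop : ∀ {β}, 0 ≤ β → sumKLargest (gibbsVec β E) k = ∑ j ∈ t, gibbsVec β E j :=
    fun hβ => hcard ▸ sumKLargest_card_eq_sum fun i hi j hj =>
      gibbsVec_antitone hβ hmono (hlower.forall_lt_of_mem_of_notMem hi hj).le
  rw [htop h1, htop (h1.trans h12)]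
  exact sum_gibbsVec_le_of_le (hk1.trans hk) hmono h12 hlower

/-- A hotter Gibbs vector is majorized by a colder one:
`τ(β₁,ℰ) ≺ τ(β₂,ℰ)` whenever `0 ≤ β₁ ≤ β₂`. -/
theorem gibbs_hotter_majorized_by_colder {m : ℕ} (hm : 0 < m)
    (E : Fin m → ℝ) (hmono : Monotone E) (hE0 : E ⟨0, hm⟩ = 0)
    (β₁ β₂ : ℝ) (h1 : 0 ≤ β₁) (h12 : β₁ ≤ β₂) :
    IsMajorizedBy (gibbsVec β₁ E) (gibbsVec β₂ E) :=
  gibbs_hotter_majorized_by_colder_general E hmono β₁ β₂ h1 h12
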